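/- Assume regularity condition (H). Let p_B ∈ (0,1) satisfy D_B(p_B) = 0 and p_C ∈ (0,1) satisfy D_C(p_C) = 0. If the map x ↦ F(x)^{J−1} is convex on [0,1], then p_C ≤ p_B; if the map x ↦ F(x)^{J−1} is concave on [0,1], then p_C ≥ p_B. (When the distribution of the best rival value is convex, the independent managed campaign yields lower posted prices — and hence higher total welfare and consumer surplus — than data-augmented bidding; with a concave distribution the comparison is reversed.) -/

import Mathlib

/-!
`D_B` and `D_C` share their first term and differ only through the integrands `G (v - p) f v` and
`(G v - p G'(v)) f v`, where `G = F ^ (J - 1)`. The second is the tangent-line approximation of the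
first at `v`, so it lies below it when `G` is convex and above it when `G` is concave. Thus
`D_C(p_C) = 0` forces `D_B(p_C) ≥ 0` (resp. `≤ 0`), and since `D_B` is strictly decreasing — by
(H) for the first term, and because shifting the argument of the increasing `F` lowers the
integral — this places `p_C` below (resp. above) the zero `p_B` of `D_B`.
-/

open intervalIntegral Set MeasureTheory Topology

theorem strictMonoOn_primitive_of_pos {f : ℝ → ℝ} {a b : ℝ} (hf : IntegrableOn f (Icc a b))
    (hpos : ∀ x ∈ Ioo a b, 0 < f x) :
    StrictMonoOn (fun x => ∫ t in a..x, f t) (Icc a b) := by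
  intro x hx y hy hxy
  have hfi : ∀ {u v}, u ∈ Icc a b → v ∈ Icc a b → IntervalIntegrable f volume u v :=
    fun hu hv => (hf.mono_set (uIcc_subset_Icc hu hv)).intervalIntegrable
  have hxy_pos : 0 < ∫ t in x..y, f t :=
    intervalIntegral_pos_of_pos_on (hfi hx hy)
      (fun t ht => hpos t ⟨hx.1.trans_lt ht.1, ht.2.trans_le hy.2⟩) hxy
  have hax := hfi (left_mem_Icc.2 (hx.1.trans hx.2)) hx
  simp only [← integral_add_adjacent_intervals hax (hfi hx hy)]
  linarith

theorem hasDerivWithinAt_primitive_Iio {f : ℝ → ℝ} {a b v : ℝ}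
    (hf : ContinuousOn f (Icc a b)) (hv : v ∈ Ioc a b) :
    HasDerivWithinAt (fun x => ∫ t in a..x, f t) (f v) (Iio v) v := by
  have hmem : Icc a b ∈ 𝓝[≤] v :=
    Filter.mem_of_superset (Icc_mem_nhdsLE hv.1) (Icc_subset_Icc_right hv.2)
  have hint : IntervalIntegrable f volume a v :=
    (hf.mono (Icc_subset_Icc_right hv.2)).intervalIntegrable_of_Icc hv.1.le
  exact (integral_hasDerivWithinAt_right hint
    ⟨Icc a b, hmem, hf.aestronglyMeasurable measurableSet_Icc⟩
    ((hf v (Ioc_subset_Icc_self hv)).mono_of_mem_nhdsWithin hmem)).mono Iio_subset_Iic_self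

theorem ConvexOn.sub_mul_le_of_hasDerivWithinAt_Iio {S : Set ℝ} {g : ℝ → ℝ} {g' y h : ℝ}
    (hg : ConvexOn ℝ S g) (hyh : y - h ∈ S) (hy : y ∈ S) (hh : 0 < h)
    (hg' : HasDerivWithinAt g g' (Iio y) y) : g y - h * g' ≤ g (y - h) := by
  have hslope := hg.slope_le_of_hasDerivWithinAt_Iio hyh hy (by linarith) hg'
  rw [slope_def_field, sub_sub_cancel, div_le_iff₀ hh] at hslope
  linarith

theorem ConcaveOn.le_sub_mul_of_hasDerivWithinAt_Iio {S : Set ℝ} {g : ℝ → ℝ} {g' y h : ℝ}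
    (hg : ConcaveOn ℝ S g) (hyh : y - h ∈ S) (hy : y ∈ S) (hh : 0 < h)
    (hg' : HasDerivWithinAt g g' (Iio y) y) : g (y - h) ≤ g y - h * g' := by
  have hslope := hg.le_slope_of_hasDerivWithinAt_Iio hyh hy (by linarith) hg'
  rw [slope_def_field, sub_sub_cancel, le_div_iff₀ hh] at hslope
  linarith

theorem strictAntiOn_integral_comp_sub_mul {g f : ℝ → ℝ} (hg : StrictMonoOn g (Icc 0 1))
    (hg_nonneg : ∀ x ∈ Icc (0:ℝ) 1, 0 ≤ g x) (hg_cont : ContinuousOn g (Icc 0 1))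
    (hf : ContinuousOn f (Icc 0 1)) (hf_pos : ∀ x ∈ Icc (0:ℝ) 1, 0 < f x) :
    StrictAntiOn (fun p => ∫ v in p..1, g (v - p) * f v) (Ico 0 1) := by
  have hcont : ∀ {p q : ℝ}, 0 ≤ p → p ≤ q →
      ContinuousOn (fun v => g (v - p) * f v) (Icc q 1) :=
    fun hp hpq => (hg_cont.comp (continuous_sub_right _).continuousOn fun v hv =>
      ⟨by linarith [hv.1], by linarith [hv.2]⟩).mul
        (hf.mono (Icc_subset_Icc (hp.trans hpq) le_rfl))
  intro p hp q hq hpq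
  have hshift : ∫ v in q..1, g (v - q) * f v < ∫ v in q..1, g (v - p) * f v := by
    refine integral_lt_integral_of_continuousOn_of_le_of_exists_lt hq.2 (hcont hq.1 le_rfl)
      (hcont hp.1 hpq.le) (fun v hv => ?_) ⟨1, right_mem_Icc.2 hq.2.le, ?_⟩
    · exact mul_le_mul_of_nonneg_right
        (hg.monotoneOn ⟨by linarith [hv.1], by linarith [hv.2, hq.1]⟩
          ⟨by linarith [hv.1], by linarith [hv.2, hp.1]⟩ (by linarith))
        (hf_pos v ⟨hq.1.trans hv.1.le, hv.2⟩).le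
    · exact mul_lt_mul_of_pos_right
        (hg ⟨by linarith [hq.2], by linarith [hq.1]⟩
          ⟨by linarith [hp.2], by linarith [hp.1]⟩ (by linarith))
        (hf_pos 1 (right_mem_Icc.2 zero_le_one))
  have hextend : ∫ v in q..1, g (v - p) * f v ≤ ∫ v in p..1, g (v - p) * f v := by
    have hpq_int : 0 ≤ ∫ v in p..q, g (v - p) * f v :=
      integral_nonneg hpq.le fun v hv => mul_nonneg
        (hg_nonneg _ ⟨by linarith [hv.1], by linarith [hv.2, hq.2, hp.1]⟩)
        (hf_pos v ⟨hp.1.trans hv.1, hv.2.trans hq.2.le⟩).le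
    have hint_pq : IntervalIntegrable (fun v => g (v - p) * f v) volume p q :=
      ((hcont hp.1 le_rfl).mono (Icc_subset_Icc_right hq.2.le)).intervalIntegrable_of_Icc hpq.le
    rw [← integral_add_adjacent_intervals hint_pq
      ((hcont hp.1 hpq.le).intervalIntegrable_of_Icc hq.2.le)]
    linarith
  exact hshift.trans_le hextend

noncomputable def biddingFOC (f F : ℝ → ℝ) (J : ℕ) (lam p : ℝ) : ℝ :=
  (1 - lam) * (1 - F p - p * f p) +
    lam * (J : ℝ) * (∫ v in p..1, F (v - p) ^ (J - 1) * f v)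

noncomputable def campaignFOC (f F : ℝ → ℝ) (J : ℕ) (lam p : ℝ) : ℝ :=
  (1 - lam) * (1 - F p - p * f p) + lam * (J : ℝ) *
    (∫ v in p..1, (F v ^ (J - 1) - p * (((J : ℝ) - 1) * F v ^ (J - 2) * f v)) * f v)

section Primitive

variable {f F : ℝ → ℝ} {J : ℕ}

theorem strictMonoOn_of_eq_primitive (hf : ContinuousOn f (Icc 0 1))
    (hf_pos : ∀ x ∈ Icc (0:ℝ) 1, 0 < f x) (hF : ∀ x, F x = ∫ t in (0:ℝ)..x, f t) :
    StrictMonoOn F (Icc 0 1) :=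
  funext hF ▸ strictMonoOn_primitive_of_pos hf.integrableOn_Icc
    fun x hx => hf_pos x (Ioo_subset_Icc_self hx)

theorem continuousOn_of_eq_primitive (hf : ContinuousOn f (Icc 0 1))
    (hF : ∀ x, F x = ∫ t in (0:ℝ)..x, f t) : ContinuousOn F (Icc 0 1) := by
  have h := continuousOn_primitive_interval (μ := volume) (a := 0) (b := 1)
    (f := f) (by rw [uIcc_of_le zero_le_one]; exact hf.integrableOn_Icc)
  rw [uIcc_of_le zero_le_one] at h
  exact funext hF ▸ h

theorem nonneg_of_eq_primitive (hf : ContinuousOn f (Icc 0 1))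
    (hf_pos : ∀ x ∈ Icc (0:ℝ) 1, 0 < f x) (hF : ∀ x, F x = ∫ t in (0:ℝ)..x, f t) :
    ∀ x ∈ Icc (0:ℝ) 1, 0 ≤ F x := fun x hx => by
  have hF0 : F 0 = 0 := by simp [hF]
  exact hF0 ▸ (strictMonoOn_of_eq_primitive hf hf_pos hF).monotoneOn
    (left_mem_Icc.2 zero_le_one) hx hx.1

theorem hasDerivWithinAt_pow_of_eq_primitive (hf : ContinuousOn f (Icc 0 1))
    (hF : ∀ x, F x = ∫ t in (0:ℝ)..x, f t) (hJ : 1 ≤ J) {v : ℝ} (hv : v ∈ Ioc 0 1) :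
    HasDerivWithinAt (fun x => F x ^ (J - 1))
      (((J : ℝ) - 1) * F v ^ (J - 2) * f v) (Iio v) v := by
  have hderiv := (funext hF ▸ hasDerivWithinAt_primitive_Iio hf hv).pow (J - 1)
  rwa [Nat.sub_sub, Nat.cast_sub hJ, Nat.cast_one] at hderiv

end Primitive

section FirstOrderConditions

variable {f F : ℝ → ℝ} {J : ℕ} {lam p : ℝ}

theorem biddingFOC_strictAntiOn (hf : ContinuousOn f (Icc 0 1))
    (hf_pos : ∀ x ∈ Icc (0:ℝ) 1, 0 < f x) (hF : ∀ x, F x = ∫ t in (0:ℝ)..x, f t)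
    (hJ : 2 ≤ J) (hlam : lam ∈ Ioo (0:ℝ) 1)
    (hreg : AntitoneOn (fun p : ℝ => 1 - F p - p * f p) (Icc 0 1)) :
    StrictAntiOn (biddingFOC f F J lam) (Ico 0 1) := by
  have hF_nonneg := nonneg_of_eq_primitive hf hf_pos hF
  have hpow_mono : StrictMonoOn (fun x => F x ^ (J - 1)) (Icc 0 1) :=
    fun x hx y hy hxy => pow_lt_pow_left₀ (strictMonoOn_of_eq_primitive hf hf_pos hF hx hy hxy)
      (hF_nonneg x hx) (by omega)
  have hintegral := strictAntiOn_integral_comp_sub_mul hpow_mono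
    (fun x hx => pow_nonneg (hF_nonneg x hx) _) ((continuousOn_of_eq_primitive hf hF).pow _)
    hf hf_pos
  have hlocal : AntitoneOn (fun p => (1 - lam) * (1 - F p - p * f p)) (Ico 0 1) :=
    fun x hx y hy hxy => mul_le_mul_of_nonneg_left
      (hreg (Ico_subset_Icc_self hx) (Ico_subset_Icc_self hy) hxy) (by linarith [hlam.2])
  have hJ_pos : 0 < lam * (J : ℝ) := mul_pos hlam.1 (by positivity)
  exact hlocal.add_strictAnti fun x hx y hy hxy =>
    mul_lt_mul_of_pos_left (hintegral hx hy hxy) hJ_pos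

theorem intervalIntegrable_biddingIntegrand (hf : ContinuousOn f (Icc 0 1))
    (hF : ∀ x, F x = ∫ t in (0:ℝ)..x, f t) (hp : p ∈ Icc (0:ℝ) 1) :
    IntervalIntegrable (fun v => F (v - p) ^ (J - 1) * f v) volume p 1 := by
  refine ContinuousOn.intervalIntegrable_of_Icc hp.2 ?_
  exact (((continuousOn_of_eq_primitive hf hF).comp (continuous_sub_right p).continuousOn
    fun v hv => ⟨by linarith [hv.1], by linarith [hv.2, hp.1]⟩).pow _).mul
    (hf.mono (Icc_subset_Icc hp.1 le_rfl))

theorem intervalIntegrable_campaignIntegrand (hf : ContinuousOn f (Icc 0 1))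
    (hF : ∀ x, F x = ∫ t in (0:ℝ)..x, f t) (hp : p ∈ Icc (0:ℝ) 1) :
    IntervalIntegrable
      (fun v => (F v ^ (J - 1) - p * (((J : ℝ) - 1) * F v ^ (J - 2) * f v)) * f v)
      volume p 1 := by
  have hsub : Icc p 1 ⊆ Icc 0 1 := Icc_subset_Icc hp.1 le_rfl
  have hFc := (continuousOn_of_eq_primitive hf hF).mono hsub
  have hfc := hf.mono hsub
  exact ContinuousOn.intervalIntegrable_of_Icc hp.2 (by fun_prop)

theorem campaignFOC_le_biddingFOC_of_convexOn (hf : ContinuousOn f (Icc 0 1))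
    (hf_pos : ∀ x ∈ Icc (0:ℝ) 1, 0 < f x) (hF : ∀ x, F x = ∫ t in (0:ℝ)..x, f t)
    (hJ : 1 ≤ J) (hlam : 0 ≤ lam) (hp : p ∈ Ioo (0:ℝ) 1)
    (hconv : ConvexOn ℝ (Icc 0 1) fun x => F x ^ (J - 1)) :
    campaignFOC f F J lam p ≤ biddingFOC f F J lam p := by
  have hintegrand : ∀ v ∈ Icc p 1,
      (F v ^ (J - 1) - p * (((J : ℝ) - 1) * F v ^ (J - 2) * f v)) * f v
        ≤ F (v - p) ^ (J - 1) * f v := fun v hv =>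
    mul_le_mul_of_nonneg_right
      (hconv.sub_mul_le_of_hasDerivWithinAt_Iio
        ⟨by linarith [hv.1], by linarith [hv.2, hp.1]⟩ ⟨hp.1.le.trans hv.1, hv.2⟩ hp.1
        (hasDerivWithinAt_pow_of_eq_primitive hf hF hJ ⟨hp.1.trans_le hv.1, hv.2⟩))
      (hf_pos v ⟨hp.1.le.trans hv.1, hv.2⟩).le
  unfold campaignFOC biddingFOC
  gcongr
  exact integral_mono_on hp.2.le
    (intervalIntegrable_campaignIntegrand hf hF (Ioo_subset_Icc_self hp))
    (intervalIntegrable_biddingIntegrand hf hF (Ioo_subset_Icc_self hp)) hintegrand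

theorem biddingFOC_le_campaignFOC_of_concaveOn (hf : ContinuousOn f (Icc 0 1))
    (hf_pos : ∀ x ∈ Icc (0:ℝ) 1, 0 < f x) (hF : ∀ x, F x = ∫ t in (0:ℝ)..x, f t)
    (hJ : 1 ≤ J) (hlam : 0 ≤ lam) (hp : p ∈ Ioo (0:ℝ) 1)
    (hconc : ConcaveOn ℝ (Icc 0 1) fun x => F x ^ (J - 1)) :
    biddingFOC f F J lam p ≤ campaignFOC f F J lam p := by
  have hintegrand : ∀ v ∈ Icc p 1, F (v - p) ^ (J - 1) * f v
      ≤ (F v ^ (J - 1) - p * (((J : ℝ) - 1) * F v ^ (J - 2) * f v)) * f v := fun v hv =>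
    mul_le_mul_of_nonneg_right
      (hconc.le_sub_mul_of_hasDerivWithinAt_Iio
        ⟨by linarith [hv.1], by linarith [hv.2, hp.1]⟩ ⟨hp.1.le.trans hv.1, hv.2⟩ hp.1
        (hasDerivWithinAt_pow_of_eq_primitive hf hF hJ ⟨hp.1.trans_le hv.1, hv.2⟩))
      (hf_pos v ⟨hp.1.le.trans hv.1, hv.2⟩).le
  unfold campaignFOC biddingFOC
  gcongr
  exact integral_mono_on hp.2.le
    (intervalIntegrable_biddingIntegrand hf hF (Ioo_subset_Icc_self hp))
    (intervalIntegrable_campaignIntegrand hf hF (Ioo_subset_Icc_self hp)) hintegrand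

end FirstOrderConditions

theorem independent_vs_bidding_price_comparison_general
    (f F : ℝ → ℝ)
    (hf_cont : ContinuousOn f (Set.Icc 0 1))
    (hf_pos : ∀ x ∈ Set.Icc (0:ℝ) 1, 0 < f x)
    (hF : ∀ x, F x = ∫ t in (0:ℝ)..x, f t)
    (J : ℕ) (hJ : 2 ≤ J)
    (lam : ℝ) (hlam : lam ∈ Set.Ioo (0:ℝ) 1)
    (hreg : AntitoneOn (fun p : ℝ => 1 - F p - p * f p) (Set.Icc 0 1))
    (pB pC : ℝ) (hpB : pB ∈ Set.Ioo (0:ℝ) 1) (hpC : pC ∈ Set.Ioo (0:ℝ) 1)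
    (hB : (1 - lam) * (1 - F pB - pB * f pB)
        + lam * (J : ℝ) * (∫ v in pB..1, F (v - pB) ^ (J - 1) * f v) = 0)
    (hC : (1 - lam) * (1 - F pC - pC * f pC)
        + lam * (J : ℝ) * (∫ v in pC..1,
            (F v ^ (J - 1) - pC * (((J : ℝ) - 1) * F v ^ (J - 2) * f v)) * f v) = 0) :
    (ConvexOn ℝ (Set.Icc 0 1) (fun x => F x ^ (J - 1)) → pC ≤ pB) ∧
    (ConcaveOn ℝ (Set.Icc 0 1) (fun x => F x ^ (J - 1)) → pB ≤ pC) := by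
  have hB : biddingFOC f F J lam pB = 0 := hB
  have hC : campaignFOC f F J lam pC = 0 := hC
  have hanti := biddingFOC_strictAntiOn hf_cont hf_pos hF hJ hlam hreg
  have hpB' := Ioo_subset_Ico_self hpB
  have hpC' := Ioo_subset_Ico_self hpC
  have hJ1 : 1 ≤ J := by omega
  refine ⟨fun hconv => ?_, fun hconc => ?_⟩
  · rw [← hanti.le_iff_ge hpB' hpC', hB, ← hC]
    exact campaignFOC_le_biddingFOC_of_convexOn hf_cont hf_pos hF hJ1 hlam.1.le hpC hconv
  · rw [← hanti.le_iff_ge hpC' hpB', hB, ← hC]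
    exact biddingFOC_le_campaignFOC_of_concaveOn hf_cont hf_pos hF hJ1 hlam.1.le hpC hconc

/-- If F^{J−1} is convex on [0,1], the independent
managed-campaign price is below the data-augmented bidding price (p_C ≤ p_B);
if F^{J−1} is concave, the comparison reverses (p_B ≤ p_C). -/
theorem independent_vs_bidding_price_comparison
    (f F : ℝ → ℝ)
    (hf_cont : ContinuousOn f (Set.Icc 0 1))
    (hf_pos : ∀ x ∈ Set.Icc (0:ℝ) 1, 0 < f x)
    (hf_logconcave : ConcaveOn ℝ (Set.Icc 0 1) (Real.log ∘ f))
    (hf_int : (∫ t in (0:ℝ)..1, f t) = 1)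
    (hF : ∀ x, F x = ∫ t in (0:ℝ)..x, f t)
    (J : ℕ) (hJ : 2 ≤ J)
    (lam : ℝ) (hlam : lam ∈ Set.Ioo (0:ℝ) 1)
    (hreg : AntitoneOn (fun p : ℝ => 1 - F p - p * f p) (Set.Icc 0 1))
    (pB pC : ℝ) (hpB : pB ∈ Set.Ioo (0:ℝ) 1) (hpC : pC ∈ Set.Ioo (0:ℝ) 1)
    (hB : (1 - lam) * (1 - F pB - pB * f pB)
        + lam * (J : ℝ) * (∫ v in pB..1, F (v - pB) ^ (J - 1) * f v) = 0)
    (hC : (1 - lam) * (1 - F pC - pC * f pC)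
        + lam * (J : ℝ) * (∫ v in pC..1,
            (F v ^ (J - 1) - pC * (((J : ℝ) - 1) * F v ^ (J - 2) * f v)) * f v) = 0) :
    (ConvexOn ℝ (Set.Icc 0 1) (fun x => F x ^ (J - 1)) → pC ≤ pB) ∧
    (ConcaveOn ℝ (Set.Icc 0 1) (fun x => F x ^ (J - 1)) → pB ≤ pC) :=
  independent_vs_bidding_price_comparison_general f F hf_cont hf_pos hF J hJ lam hlam hreg pB pC hpB
    hpC hB hC
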